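/- For every n ≥ 1 and every ε ∈ 2^ω, if G_ε is a subgraph of a B_n-free graph G, then the degree of every vertex v of G_ε in G_ε equals the degree of v in G. -/

import Mathlib

open SimpleGraph

/-- `H` is isomorphic to a (not necessarily induced) subgraph of `G`:
    there is an injective graph homomorphism from `H` to `G`. -/
def IsSubgraphOf {V W : Type*} (H : SimpleGraph V) (G : SimpleGraph W) : Prop :=
  ∃ f : H →g G, Function.Injective f

/-- `G` is `F`-free: no subgraph of `G` (not necessarily induced) is isomorphic to `F`. -/
def GraphFree {V W : Type*} (F : SimpleGraph V) (G : SimpleGraph W) : Prop :=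
  ¬ IsSubgraphOf F G

/-- The `n`-bridge `B_n`. Vertices: `0 = a`, `1 = b`, `2 = c`,
    `3,…,n+2 = x₁,…,xₙ`, `n+3 = d`, `n+4 = e`.  Edges: `(a,c)`, `(b,c)`,
    `(c,x₁)`, `(xᵢ,xᵢ₊₁)` for `1 ≤ i < n`, `(xₙ,d)`, `(xₙ,e)`. -/
def Bridge (n : ℕ) : SimpleGraph (Fin (n + 5)) :=
  SimpleGraph.fromRel (fun u v =>
    ((u : ℕ) = 0 ∧ (v : ℕ) = 2) ∨ ((u : ℕ) = 1 ∧ (v : ℕ) = 2) ∨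
    (2 ≤ (u : ℕ) ∧ (u : ℕ) < n + 2 ∧ (v : ℕ) = (u : ℕ) + 1) ∨
    ((u : ℕ) = n + 2 ∧ (v : ℕ) = n + 3) ∨ ((u : ℕ) = n + 2 ∧ (v : ℕ) = n + 4))

/-- Core of a drive through (without its exits): the vertices of `K_{n+2}` and, for each
    of the `n` middle vertices, a copy of a dead end minus its top vertex `p_{n+1}`. -/
abbrev TCore (n : ℕ) := Fin (n + 2) ⊕ (Fin n × Fin (2 * n + 3))

/-- Vertex set of the graph `G_ε`:
    * `Sum.inl u`  — the dead end `D^ε` (vertices `0,…,2n+3`, where `0,…,n+2` is the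
      `K_{n+3}` with `k_{n+3} = p₀ = n+2`, and `2n+3 = p_{n+1}` is the left exit
      `l^ε(0)` of the first drive through);
    * `Sum.inr (Sum.inl (m, c))` — the core of the `m`-th drive through `T^ε(m)`;
    * `Sum.inr (Sum.inr ⟨m, c⟩)` — the `m`-th connecting path: the right exit
      `r^ε(m)` (`c = 0`), the interior of the highway `H^ε(m)` of length `n-1+ε(m)`,
      and the left exit `l^ε(m+1)` (`c = n + ε(m) - 1`); when `n = 1` and `ε(m) = 0`
      this path consists of a single vertex `r^ε(m) = l^ε(m+1)`, realizing the
      required identification. -/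
abbrev GV (n : ℕ) (ε : ℕ → Bool) :=
  Fin (2 * n + 4) ⊕ (ℕ × TCore n) ⊕ ((m : ℕ) × Fin (n + (ε m).toNat))

/-- Edges inside the core of a drive through: `K_{n+2}` is complete, each dead-end
    copy carries the dead-end edges, and the vertex `pₙ = 2n+2` of the `i`-th copy is
    joined to `k_{i+1}` (since `p_{n+1}` of that copy is identified with `k_{i+1}`). -/
def TRel (n : ℕ) : TCore n → TCore n → Prop
  | .inl u, .inl v => u ≠ v
  | .inr (i, x), .inr (i', y) => i = i' ∧
      (((x : ℕ) < n + 3 ∧ (y : ℕ) < n + 3 ∧ x ≠ y) ∨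
       (n + 2 ≤ (x : ℕ) ∧ (x : ℕ) < 2 * n + 2 ∧ (y : ℕ) = (x : ℕ) + 1))
  | .inr (i, x), .inl j => (x : ℕ) = 2 * n + 2 ∧ (j : ℕ) = (i : ℕ) + 1
  | _, _ => False

/-- The graph `G_ε`: the dead end `D^ε` whose `p_{n+1}` is the left exit `l^ε(0)`
    joined to `k₁` of `T^ε(0)`; the drive throughs `T^ε(m)`; and for each `m` the
    highway `H^ε(m)` of length `n - 1 + ε(m)` joining the right exit `r^ε(m)`
    (adjacent to `k_{n+2}` of `T^ε(m)`) to the left exit `l^ε(m+1)` (adjacent to `k₁`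
    of `T^ε(m+1)`), where `r^ε(m) = l^ε(m+1)` when `n = 1` and `ε(m) = 0`. -/
def GEps (n : ℕ) (ε : ℕ → Bool) : SimpleGraph (GV n ε) :=
  SimpleGraph.fromRel (fun a b =>
    match a, b with
    | .inl u, .inl v =>
        ((u : ℕ) < n + 3 ∧ (v : ℕ) < n + 3 ∧ u ≠ v) ∨
        (n + 2 ≤ (u : ℕ) ∧ (u : ℕ) < 2 * n + 3 ∧ (v : ℕ) = (u : ℕ) + 1)
    | .inl u, .inr (.inl (m, .inl j)) => (u : ℕ) = 2 * n + 3 ∧ m = 0 ∧ (j : ℕ) = 0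
    | .inr (.inl (m, c)), .inr (.inl (m', c')) => m = m' ∧ TRel n c c'
    | .inr (.inl (m, .inl j)), .inr (.inr ⟨m', c⟩) =>
        (j : ℕ) = n + 1 ∧ m' = m ∧ (c : ℕ) = 0
    | .inr (.inr ⟨m, c⟩), .inr (.inr ⟨m', c'⟩) => m' = m ∧ (c' : ℕ) = (c : ℕ) + 1
    | .inr (.inr ⟨m, c⟩), .inr (.inl (m', .inl j)) =>
        (c : ℕ) = n + (ε m).toNat - 1 ∧ m' = m + 1 ∧ (j : ℕ) = 0
    | _, _ => False)

/-!
If `f` embeds `G_ε` into `G` and `y` is a neighbour of `f v` outside `f(N(v))`, then any copy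
of `B_n` minus its leaf `a` in `G_ε` with `c = v` (a *forked path* at `v`) whose image misses `y`
closes up, together with `y`, to a copy of `B_n` in `G`. So it suffices that every vertex `v` has
a forked path, and that for every non-neighbour `u ≠ v` there is a forked path at `v` avoiding
`u` or one at `u` avoiding `v`.

The vertices of the cliques `K_{n+2}` and of the paths `p₀, …, pₙ` of the dead ends (the
*robust* vertices) have forked paths avoiding any single non-neighbour, and every vertex has one
avoiding any single non-neighbour that is not robust. Each forked path either runs through a
whole clique and ends in two outside neighbours of clique vertices, or follows a dead-end path or
a highway into a clique and forks inside it; which way to go is decided by the position of the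
vertex to be avoided.
-/

section ForkedPath

variable {W V : Type*} {H : SimpleGraph W} {G : SimpleGraph V} {n : ℕ}

/-- `q 0, …, q (n + 2)` is a path and `q (n + 3)` is a further neighbour of `q (n + 1)`:
this is `Bridge n` without its leaf `a`, with `q 0 = b`, `q 1 = c`, `q (j + 1) = xⱼ`,
`q (n + 2) = d` and `q (n + 3) = e`. -/
def IsForkedPath (H : SimpleGraph W) (n : ℕ) (q : ℕ → W) : Prop :=
  (∀ j ≤ n + 1, H.Adj (q j) (q (j + 1))) ∧ H.Adj (q (n + 1)) (q (n + 3)) ∧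
    Set.InjOn q (Set.Iio (n + 4))

def HasForkedPathAvoiding (H : SimpleGraph W) (n : ℕ) (v : W) (S : Set W) : Prop :=
  ∃ q : ℕ → W, IsForkedPath H n q ∧ q 1 = v ∧ ∀ j < n + 4, q j ∉ S

theorem IsForkedPath.map {q : ℕ → W} (hq : IsForkedPath H n q) (f : H →g G)
    (hf : Function.Injective f) : IsForkedPath G n (f ∘ q) :=
  ⟨fun j hj => f.map_adj (hq.1 j hj), f.map_adj hq.2.1, hf.comp_injOn hq.2.2⟩

theorem IsForkedPath.isSubgraphOf_bridge {q : ℕ → V} (hq : IsForkedPath G n q) {y : V}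
    (hy : G.Adj y (q 1)) (hyq : ∀ j < n + 4, q j ≠ y) : IsSubgraphOf (Bridge n) G := by
  obtain ⟨hpath, hfork, hinj⟩ := hq
  let g : Fin (n + 5) → V := fun a => if (a : ℕ) = 0 then y else q (a - 1)
  have hg : ∀ a : Fin (n + 5), (a : ℕ) ≠ 0 → g a = q (a - 1) := fun a ha => if_neg ha
  have hg_adj : ∀ a b : Fin (n + 5),
      ((a : ℕ) = 0 ∧ (b : ℕ) = 2) ∨ ((a : ℕ) = 1 ∧ (b : ℕ) = 2) ∨
      (2 ≤ (a : ℕ) ∧ (a : ℕ) < n + 2 ∧ (b : ℕ) = a + 1) ∨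
      ((a : ℕ) = n + 2 ∧ (b : ℕ) = n + 3) ∨ ((a : ℕ) = n + 2 ∧ (b : ℕ) = n + 4) →
      G.Adj (g a) (g b) := by
    rintro a b (⟨ha, hb⟩ | ⟨ha, hb⟩ | ⟨ha, ha', hb⟩ | ⟨ha, hb⟩ | ⟨ha, hb⟩)
    · rw [show g a = y from if_pos ha, hg b (by omega), hb]
      exact hy
    all_goals rw [hg a (by omega), hg b (by omega)]
    · simpa [ha, hb] using hpath 0 (by omega)
    · rw [hb, show (a : ℕ) + 1 - 1 = a - 1 + 1 by omega]
      exact hpath _ (by omega)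
    · simpa [ha, hb] using hpath (n + 1) le_rfl
    · simpa [ha, hb] using hfork
  refine ⟨⟨g, fun {a b} hab => ?_⟩, fun a b hab => ?_⟩
  · rw [Bridge, fromRel_adj] at hab
    obtain ⟨-, hab | hab⟩ := hab
    exacts [hg_adj a b hab, (hg_adj b a hab).symm]
  · have hq : ∀ c : Fin (n + 5), (c : ℕ) ≠ 0 → q (c - 1) ≠ y :=
      fun c hc => hyq _ (by omega)
    simp only [RelHom.coeFn_mk, g] at hab
    apply Fin.ext
    split_ifs at hab with ha hb hb
    · omega
    · exact absurd hab.symm (hq b hb)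
    · exact absurd hab (hq a ha)
    · have := hinj (by simp only [Set.mem_Iio]; omega) (by simp only [Set.mem_Iio]; omega) hab
      omega

theorem HasForkedPathAvoiding.isSubgraphOf_bridge {v : W} {S : Set W}
    (h : HasForkedPathAvoiding H n v S) (f : H →g G) (hf : Function.Injective f) {y : V}
    (hy : G.Adj (f v) y) (hyS : ∀ u, f u = y → u ∈ S) : IsSubgraphOf (Bridge n) G := by
  obtain ⟨q, hq, rfl, hqS⟩ := h
  exact (hq.map f hf).isSubgraphOf_bridge hy.symm fun j hj hqj => hqS j hj (hyS _ hqj)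

/-- The forked path `P 0, …, P r, κ 0, κ 1, …`: a path that continues into a clique. -/
theorem hasForkedPathAvoiding_of_append_clique {P κ : ℕ → W} {r : ℕ} {S : Set W}
    (hr : 1 ≤ r) (hrn : r ≤ n + 1)
    (hP : ∀ j < r, H.Adj (P j) (P (j + 1))) (hPinj : Set.InjOn P (Set.Iic r))
    (hκ : ∀ s < n + 3 - r, ∀ t < n + 3 - r, s ≠ t → H.Adj (κ s) (κ t))
    (hPκ : ∀ j ≤ r, ∀ t < n + 3 - r, P j ≠ κ t)
    (h0 : H.Adj (P r) (κ 0)) (h1 : r = n + 1 → H.Adj (P r) (κ 1))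
    (hPS : ∀ j ≤ r, P j ∉ S) (hκS : ∀ t < n + 3 - r, κ t ∉ S) :
    HasForkedPathAvoiding H n (P 1) S := by
  refine ⟨fun j => if j ≤ r then P j else κ (j - (r + 1)), ⟨fun j hj => ?_, ?_, ?_⟩,
    if_pos hr, fun j hj => ?_⟩
  · dsimp only
    by_cases hjr : j + 1 ≤ r
    · rw [if_pos (by omega), if_pos hjr]
      exact hP j hjr
    rw [if_neg hjr]
    by_cases hjr' : j = r
    · rw [if_pos hjr'.le, hjr', Nat.sub_self]
      exact h0
    rw [if_neg (by omega), show j + 1 - (r + 1) = j - (r + 1) + 1 by omega]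
    exact hκ _ (by omega) _ (by omega) (by omega)
  · dsimp only
    rw [if_neg (show ¬ n + 3 ≤ r by omega)]
    by_cases hrn' : r = n + 1
    · subst hrn'
      rw [if_pos le_rfl, show n + 3 - (n + 1 + 1) = 1 by omega]
      exact h1 rfl
    rw [if_neg (by omega)]
    exact hκ _ (by omega) _ (by omega) (by omega)
  · intro a ha c hc hac
    simp only [Set.mem_Iio] at ha hc
    dsimp only at hac
    split_ifs at hac with har hcr hcr
    · exact hPinj (Set.mem_Iic.2 har) (Set.mem_Iic.2 hcr) hac
    · exact absurd hac (hPκ a har _ (by omega))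
    · exact absurd hac.symm (hPκ c hcr _ (by omega))
    · by_contra hne
      exact (hκ _ (by omega) _ (by omega) (by omega)).ne hac
  · dsimp only
    split_ifs with hjr
    exacts [hPS j hjr, hκS _ (by omega)]

theorem swap_apply_lt {N a b t : ℕ} (ha : a < N) (hb : b < N) (ht : t < N) :
    Equiv.swap a b t < N := by
  rw [Equiv.swap_apply_def]
  split_ifs <;> assumption

theorem exists_perm_apply_eq_apply_eq {N a b x y : ℕ} (ha : a < N) (hb : b < N) (hx : x < N)
    (hy : y < N) (hab : a ≠ b) (hxy : x ≠ y) :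
    ∃ π : Equiv.Perm ℕ, π a = x ∧ π b = y ∧ ∀ t < N, π t < N := by
  set z := Equiv.swap a x y
  have hza : z ≠ a := by
    intro h
    have h' := congrArg (Equiv.swap a x) h
    simp only [z, Equiv.swap_apply_self, Equiv.swap_apply_left] at h'
    exact hxy h'.symm
  refine ⟨Equiv.swap a x * Equiv.swap b z, ?_, ?_, fun t ht => ?_⟩
  · rw [Equiv.Perm.mul_apply, Equiv.swap_apply_of_ne_of_ne hab (Ne.symm hza),
      Equiv.swap_apply_left]
  · rw [Equiv.Perm.mul_apply, Equiv.swap_apply_left, Equiv.swap_apply_self]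
  · exact swap_apply_lt ha hx (swap_apply_lt hb (swap_apply_lt ha hx hy) ht)

/-- The forked path `b, κ i, …, κ w, κ _, e` through all `n + 2` vertices of a clique. -/
theorem hasForkedPathAvoiding_of_clique {κ : ℕ → W} {i w : ℕ} {b e : W} {S : Set W}
    (hn : 1 ≤ n) (hκ : ∀ s < n + 2, ∀ t < n + 2, s ≠ t → H.Adj (κ s) (κ t))
    (hi : i < n + 2) (hw : w < n + 2) (hiw : i ≠ w)
    (hb : H.Adj (κ i) b) (he : H.Adj (κ w) e) (hbe : b ≠ e)
    (hκb : ∀ t < n + 2, κ t ≠ b) (hκe : ∀ t < n + 2, κ t ≠ e)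
    (hS : ∀ u ∈ S, u ≠ b ∧ u ≠ e ∧ ∀ t < n + 2, κ t ≠ u) :
    HasForkedPathAvoiding H n (κ i) S := by
  obtain ⟨π, hπ0, hπn, hπlt⟩ :=
    exists_perm_apply_eq_apply_eq (by omega) (by omega) hi hw (by omega : 0 ≠ n) hiw
  refine ⟨fun j => if j = 0 then b else if j ≤ n + 2 then κ (π (j - 1)) else e,
    ⟨fun j hj => ?_, ?_, ?_⟩, by simp [hπ0], fun j hj hjS => ?_⟩
  · have hj' : j + 1 ≤ n + 2 := by omega
    simp only [j.succ_ne_zero, hj', if_false, if_true, Nat.add_sub_cancel]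
    split_ifs with hj0 hj0'
    · rw [hj0, hπ0]
      exact hb.symm
    · exact hκ _ (hπlt _ (by omega)) _ (hπlt _ (by omega)) (π.injective.ne (by omega))
    · omega
  · simp only [n.succ_ne_zero, if_false, show n + 3 ≠ 0 by omega,
      show ¬ n + 3 ≤ n + 2 by omega, show n + 1 ≤ n + 2 by omega, if_true, Nat.add_sub_cancel,
      hπn]
    exact he
  · intro a ha c hc hac
    simp only [Set.mem_Iio] at ha hc
    have hκπ : ∀ {s t}, s ≤ n + 1 → t ≤ n + 1 → κ (π s) = κ (π t) → s = t :=
      fun hs ht h => by_contra fun hst =>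
        (hκ _ (hπlt _ (by omega)) _ (hπlt _ (by omega)) (π.injective.ne hst)).ne h
    dsimp only at hac
    split_ifs at hac <;> first
      | omega
      | exact absurd hac hbe
      | exact absurd hac hbe.symm
      | exact absurd hac (hκb _ (hπlt _ (by omega)))
      | exact absurd hac.symm (hκb _ (hπlt _ (by omega)))
      | exact absurd hac (hκe _ (hπlt _ (by omega)))
      | exact absurd hac.symm (hκe _ (hπlt _ (by omega)))
      | (have := hκπ (by omega) (by omega) hac; omega)
  · obtain ⟨hub, hue, huκ⟩ := hS _ hjS
    dsimp only at hub hue huκ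
    split_ifs at hub hue huκ with h0 h1
    exacts [hub rfl, huκ _ (hπlt _ (by omega)) rfl, hue rfl]

theorem neighborSet_eq_image_of_hasForkedPathAvoiding
    (hpair : ∀ v u, u ≠ v → ¬ H.Adj v u →
      HasForkedPathAvoiding H n v {u} ∨ HasForkedPathAvoiding H n u {v})
    (hempty : ∀ v, HasForkedPathAvoiding H n v ∅) (f : H →g G) (hf : Function.Injective f)
    (hG : GraphFree (Bridge n) G) (v : W) : G.neighborSet (f v) = f '' H.neighborSet v := by
  refine Set.Subset.antisymm (fun y hy => by_contra fun hyv => hG ?_) ?_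
  · by_cases hyf : ∃ u, f u = y
    · obtain ⟨u, rfl⟩ := hyf
      have hvu : ¬ H.Adj v u := fun h => hyv ⟨u, h, rfl⟩
      have huv : u ≠ v := by
        rintro rfl
        exact G.irrefl hy
      rcases hpair v u huv hvu with h | h
      · exact h.isSubgraphOf_bridge f hf hy fun w hw => hf hw
      · exact h.isSubgraphOf_bridge f hf (G.adj_symm hy) fun w hw => hf hw
    · push Not at hyf
      exact (hempty v).isSubgraphOf_bridge f hf hy fun w hw => absurd hw (hyf w)
  · rintro _ ⟨u, hu, rfl⟩
    exact f.map_adj hu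

end ForkedPath

namespace GEps

variable {n : ℕ} {ε : ℕ → Bool}

/-- The vertex `k_{j+1}` of `T^ε(m)`. -/
def kVert (m j : ℕ) : GV n ε := .inr (.inl (m, .inl (Fin.ofNat _ j)))

/-- Vertex `x` of a dead end: `none` is `D^ε`, `some (m, i)` is the dead end hanging at
`kVert m (i + 1)` of `T^ε(m)`. Positions `0, …, n + 2` form the clique, and position `n + 2 + j`
is `pⱼ`, so that `p_{n+1}` (position `2 n + 3`) is `l^ε(0)`, respectively `kVert m (i + 1)`. -/
def deVert : Option (ℕ × Fin n) → ℕ → GV n ε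
  | none, x => .inl (Fin.ofNat _ x)
  | some (m, i), x =>
    if x = 2 * n + 3 then kVert m (i + 1) else .inr (.inl (m, .inr (i, Fin.ofNat _ x)))

/-- Position `t` on the path from `kVert m (n + 1)` (`t = 0`) through `H^ε(m)` to
`kVert (m + 1) 0` (`t = n + ε(m) + 1`). -/
def hwVert (m t : ℕ) : GV n ε :=
  if _ : t = 0 then kVert m (n + 1)
  else if _ : t ≤ n + (ε m).toNat then .inr (.inr ⟨m, ⟨t - 1, by omega⟩⟩)
  else kVert (m + 1) 0

theorem kVert_eq {m j : ℕ} (hj : j < n + 2) :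
    (kVert m j : GV n ε) = .inr (.inl (m, .inl ⟨j, hj⟩)) := by
  simp [kVert, Fin.ext_iff, Nat.mod_eq_of_lt hj]

theorem deVert_none_eq {x : ℕ} (hx : x < 2 * n + 4) :
    (deVert none x : GV n ε) = .inl ⟨x, hx⟩ := by
  simp [deVert, Fin.ext_iff, Nat.mod_eq_of_lt hx]

theorem deVert_some_eq {m : ℕ} {i : Fin n} {x : ℕ} (hx : x < 2 * n + 3) :
    (deVert (some (m, i)) x : GV n ε) = .inr (.inl (m, .inr (i, ⟨x, hx⟩))) := by
  simp [deVert, Fin.ext_iff, Nat.mod_eq_of_lt hx, show x ≠ 2 * n + 3 by omega]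

theorem deVert_some_top {m : ℕ} {i : Fin n} :
    (deVert (some (m, i)) (2 * n + 3) : GV n ε) = kVert m (i + 1) :=
  if_pos rfl

theorem hwVert_zero {m : ℕ} : (hwVert m 0 : GV n ε) = kVert m (n + 1) :=
  dif_pos rfl

theorem hwVert_eq {m t : ℕ} (ht : 1 ≤ t) (ht' : t ≤ n + (ε m).toNat) :
    (hwVert m t : GV n ε) = .inr (.inr ⟨m, ⟨t - 1, by omega⟩⟩) := by
  simp [hwVert, show t ≠ 0 by omega, ht']

theorem hwVert_top {m : ℕ} : (hwVert m (n + (ε m).toNat + 1) : GV n ε) = kVert (m + 1) 0 := by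
  simp [hwVert]

theorem kVert_inj {m m' j j' : ℕ} (hj : j < n + 2) (hj' : j' < n + 2) :
    (kVert m j : GV n ε) = kVert m' j' ↔ m = m' ∧ j = j' := by
  simp [kVert_eq hj, kVert_eq hj']

theorem deVert_inj {o : Option (ℕ × Fin n)} {x y : ℕ} (hx : x ≤ 2 * n + 3)
    (hy : y ≤ 2 * n + 3) : (deVert o x : GV n ε) = deVert o y ↔ x = y := by
  rcases o with _ | ⟨m, i⟩
  · simp [deVert_none_eq (show x < 2 * n + 4 by omega),
      deVert_none_eq (show y < 2 * n + 4 by omega)]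
  rcases hx.lt_or_eq with hx | rfl <;> rcases hy.lt_or_eq with hy | rfl
  · simp [deVert_some_eq hx, deVert_some_eq hy]
  · simp [deVert_some_eq hx, deVert_some_top, kVert, hx.ne]
  · simp [deVert_some_eq hy, deVert_some_top, kVert, hy.ne']
  · simp

theorem hwVert_inj {m t t' : ℕ} (ht : t ≤ n + (ε m).toNat + 1)
    (ht' : t' ≤ n + (ε m).toNat + 1) : (hwVert m t : GV n ε) = hwVert m t' ↔ t = t' := by
  simp only [hwVert]
  split_ifs <;> simp [kVert, Fin.ext_iff] <;> omega

theorem deVert_ne_kVert {o : Option (ℕ × Fin n)} {x m j : ℕ} (hx : x ≤ 2 * n + 2)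
    (hj : j < n + 2) : (deVert o x : GV n ε) ≠ kVert m j := by
  rcases o with _ | ⟨m', i⟩
  · simp [deVert_none_eq (show x < 2 * n + 4 by omega), kVert_eq hj]
  · simp [deVert_some_eq (show x < 2 * n + 3 by omega), kVert_eq hj]

theorem hwVert_ne_kVert {m t m' j : ℕ} (ht : 1 ≤ t) (ht' : t ≤ n + (ε m).toNat)
    (hj : j < n + 2) : (hwVert m t : GV n ε) ≠ kVert m' j := by
  simp [hwVert_eq ht ht', kVert_eq hj]

theorem hwVert_ne_kVert_self {m t j : ℕ} (ht : 1 ≤ t) (ht' : t ≤ n + (ε m).toNat + 1)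
    (hj : j < n + 2) : (hwVert m t : GV n ε) ≠ kVert m j := by
  rcases ht'.lt_or_eq with ht' | rfl
  · exact hwVert_ne_kVert ht (by omega) hj
  · rw [hwVert_top, Ne, kVert_inj (by omega) hj]
    omega

theorem kVert_adj {m j j' : ℕ} (hj : j < n + 2) (hj' : j' < n + 2) (hjj' : j ≠ j') :
    (GEps n ε).Adj (kVert m j) (kVert m j') := by
  rw [kVert_eq hj, kVert_eq hj', GEps, fromRel_adj]
  simp [TRel, hjj']

theorem deVert_adj_of_lt {o : Option (ℕ × Fin n)} {x y : ℕ} (hx : x < n + 3) (hy : y < n + 3)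
    (hxy : x ≠ y) : (GEps n ε).Adj (deVert o x) (deVert o y) := by
  rcases o with _ | ⟨m, i⟩
  · rw [deVert_none_eq (by omega), deVert_none_eq (by omega), GEps, fromRel_adj]
    simp [hxy, hx, hy]
  · rw [deVert_some_eq (by omega), deVert_some_eq (by omega), GEps, fromRel_adj]
    simp [TRel, hxy, hx, hy]

theorem deVert_adj_succ {o : Option (ℕ × Fin n)} {x : ℕ} (hx : n + 2 ≤ x)
    (hx' : x ≤ 2 * n + 2) : (GEps n ε).Adj (deVert o x) (deVert o (x + 1)) := by
  rcases o with _ | ⟨m, i⟩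
  · rw [deVert_none_eq (by omega), deVert_none_eq (by omega), GEps, fromRel_adj]
    simp [hx, show x < 2 * n + 3 by omega]
  · rw [deVert_some_eq (by omega)]
    by_cases hx2 : x + 1 = 2 * n + 3
    · rw [deVert, if_pos hx2, kVert_eq (by omega), GEps, fromRel_adj]
      simp [TRel, show x = 2 * n + 2 by omega]
    · rw [deVert_some_eq (by omega), GEps, fromRel_adj]
      simp [TRel, hx, show x < 2 * n + 2 by omega]

theorem hwVert_adj_succ (hn : 1 ≤ n) {m t : ℕ} (ht : t ≤ n + (ε m).toNat) :
    (GEps n ε).Adj (hwVert m t) (hwVert m (t + 1)) := by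
  rw [GEps, fromRel_adj]
  rcases Nat.eq_zero_or_pos t with rfl | ht0
  · rw [hwVert_zero, hwVert_eq le_rfl (by omega), kVert_eq (by omega)]
    simp
  rcases ht.lt_or_eq with ht' | rfl
  · rw [hwVert_eq ht0 ht, hwVert_eq (by omega) ht']
    simp [Nat.sub_add_cancel ht0, (Nat.sub_one_lt ht0.ne').ne]
  · rw [hwVert_eq ht0 ht, hwVert_top, kVert_eq (by omega)]
    simp

theorem deVert_none_adj_kVert : (GEps n ε).Adj (deVert none (2 * n + 3)) (kVert 0 0) := by
  rw [deVert_none_eq (by omega), kVert_eq (by omega), GEps, fromRel_adj]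
  simp

/-- The vertices of the clique `K_{n+2}` next to `p_{n+1}` of the dead end `o`, other than
`p_{n+1}` itself, listed from a neighbour of `p_{n+1}`. -/
def exitClique : Option (ℕ × Fin n) → ℕ → GV n ε
  | none, t => kVert 0 t
  | some (m, i), t => kVert m (if t ≤ i then t else t + 1)

theorem exitClique_adj {o : Option (ℕ × Fin n)} {s t : ℕ}
    (hs : s ≤ n ∨ o = none ∧ s = n + 1) (ht : t ≤ n ∨ o = none ∧ t = n + 1)
    (hst : s ≠ t) :
    (GEps n ε).Adj (exitClique o s) (exitClique o t) := by
  rcases o with _ | ⟨m, i⟩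
  · exact kVert_adj (by omega) (by omega) hst
  · have := i.isLt
    simp only [reduceCtorEq, false_and, or_false] at hs ht
    exact kVert_adj (by split_ifs <;> omega) (by split_ifs <;> omega) (by split_ifs <;> omega)

theorem deVert_top_adj_exitClique (o : Option (ℕ × Fin n)) :
    (GEps n ε).Adj (deVert o (2 * n + 3)) (exitClique o 0) := by
  rcases o with _ | ⟨m, i⟩
  · exact deVert_none_adj_kVert
  · rw [deVert_some_top, exitClique, if_pos (Nat.zero_le _)]
    exact kVert_adj (by omega) (by omega) (by omega)

theorem deVert_ne_exitClique {o : Option (ℕ × Fin n)} {x t : ℕ} (hx : x ≤ 2 * n + 3)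
    (ht : t ≤ n ∨ o = none ∧ t = n + 1) : (deVert o x : GV n ε) ≠ exitClique o t := by
  rcases o with _ | ⟨m, i⟩
  · rcases hx.lt_or_eq with hx | rfl
    · exact deVert_ne_kVert (by omega) (by omega)
    · simp [deVert_none_eq, exitClique, kVert_eq (show t < n + 2 by omega)]
  · have := i.isLt
    simp only [reduceCtorEq, false_and, or_false] at ht
    rcases hx.lt_or_eq with hx | rfl
    · exact deVert_ne_kVert (by omega) (by split_ifs <;> omega)
    · rw [deVert_some_top, exitClique, Ne, kVert_inj (by omega) (by split_ifs <;> omega)]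
      split_ifs <;> omega

/-- The left exit `l^ε(m)`. -/
def leftExit (m : ℕ) : GV n ε :=
  if m = 0 then deVert none (2 * n + 3) else hwVert (m - 1) (n + (ε (m - 1)).toNat)

/-- The only neighbour of `kVert m j` outside the clique `K_{n+2}` of `T^ε(m)`. -/
def outerNbr (m j : ℕ) : GV n ε :=
  if h : 1 ≤ j ∧ j ≤ n then deVert (some (m, ⟨j - 1, by omega⟩)) (2 * n + 2)
  else if j = 0 then leftExit m else hwVert m 1

theorem leftExit_adj_kVert (hn : 1 ≤ n) (m : ℕ) : (GEps n ε).Adj (leftExit m) (kVert m 0) := by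
  rw [leftExit]
  split_ifs with hm
  · subst hm
    exact deVert_none_adj_kVert
  · have h := hwVert_adj_succ (ε := ε) hn (m := m - 1) le_rfl
    rwa [hwVert_top, Nat.sub_add_cancel (by omega)] at h

theorem kVert_adj_outerNbr (hn : 1 ≤ n) {m j : ℕ} (hj : j < n + 2) :
    (GEps n ε).Adj (kVert m j) (outerNbr m j) := by
  rw [outerNbr]
  split_ifs with h h0
  · have h' := deVert_adj_succ (ε := ε) (o := some (m, ⟨j - 1, by omega⟩)) (x := 2 * n + 2)
      (by omega) le_rfl
    rw [deVert_some_top, show j - 1 + 1 = j by omega] at h'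
    exact h'.symm
  · subst h0
    exact (leftExit_adj_kVert hn m).symm
  · have h' := hwVert_adj_succ (ε := ε) hn (m := m) (t := 0) (by omega)
    rwa [hwVert_zero, show n + 1 = j by omega] at h'

theorem outerNbr_eq_of_pos {m j : ℕ} (hj : 1 ≤ j) (hj' : j ≤ n) :
    (outerNbr m j : GV n ε) =
      .inr (.inl (m, .inr (⟨j - 1, by omega⟩, ⟨2 * n + 2, by omega⟩))) := by
  rw [outerNbr, dif_pos ⟨hj, hj'⟩, deVert_some_eq]

theorem outerNbr_zero {m : ℕ} : (outerNbr m 0 : GV n ε) = leftExit m := by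
  simp [outerNbr]

theorem outerNbr_last (hn : 1 ≤ n) {m : ℕ} : (outerNbr m (n + 1) : GV n ε) =
    .inr (.inr ⟨m, ⟨0, by omega⟩⟩) := by
  rw [outerNbr, dif_neg (by omega), if_neg (by omega), hwVert_eq le_rfl (by omega)]

theorem outerNbr_ne_kVert (hn : 1 ≤ n) {m j m' t : ℕ} (hj : j < n + 2) (ht : t < n + 2) :
    (outerNbr m j : GV n ε) ≠ kVert m' t := by
  rw [kVert_eq ht]
  rcases Nat.eq_zero_or_pos j with rfl | hj0
  · rw [outerNbr_zero, leftExit]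
    split_ifs
    · simp [deVert_none_eq]
    · simp [hwVert_eq (show 1 ≤ n + (ε (m - 1)).toNat by omega) le_rfl]
  rcases (show j ≤ n ∨ j = n + 1 by omega) with hjn | rfl
  · simp [outerNbr_eq_of_pos hj0 hjn]
  · simp [outerNbr_last hn]

theorem outerNbr_inj (hn : 1 ≤ n) {m j j' : ℕ} (hj : j < n + 2) (hj' : j' < n + 2)
    (h : (outerNbr m j : GV n ε) = outerNbr m j') : j = j' := by
  have cases : ∀ {k}, k < n + 2 → k = 0 ∨ (1 ≤ k ∧ k ≤ n) ∨ k = n + 1 := by omega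
  have hleft : (leftExit m : GV n ε) = .inl ⟨2 * n + 3, by omega⟩ ∨
      ∃ h, m ≠ 0 ∧
        (leftExit m : GV n ε) = .inr (.inr ⟨m - 1, ⟨n + (ε (m - 1)).toNat - 1, h⟩⟩) := by
    rw [leftExit]
    split_ifs with hm
    · exact Or.inl (deVert_none_eq _)
    · exact Or.inr ⟨by omega, hm, hwVert_eq (by omega) le_rfl⟩
  rcases cases hj with rfl | ⟨h1, h2⟩ | rfl <;> rcases cases hj' with rfl | ⟨h1', h2'⟩ | rfl
  all_goals
    simp only [outerNbr_zero, outerNbr_last hn, outerNbr_eq_of_pos, *] at h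
  all_goals
    first
    | rfl
    | (rcases hleft with hl | ⟨_, hm, hl⟩ <;> simp [hl] at h <;> omega)

theorem hasForkedPathAvoiding_kVert (hn : 1 ≤ n) {m i : ℕ} (hi : i < n + 2) {S : Set (GV n ε)}
    (hS : S.Subsingleton)
    (hSv : ∀ u ∈ S, ¬ (GEps n ε).Adj (kVert m i) u ∧ u ≠ kVert m i) :
    HasForkedPathAvoiding (GEps n ε) n (kVert m i) S := by
  obtain ⟨a, b, ha, hb, hai, hbi, hab⟩ :
      ∃ a b, a < n + 2 ∧ b < n + 2 ∧ a ≠ i ∧ b ≠ i ∧ a ≠ b := by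
    rcases Nat.eq_zero_or_pos i with rfl | hi0
    exacts [⟨1, n + 1, by omega⟩, ⟨0, if i = 1 then n + 1 else 1, by split_ifs <;> omega⟩]
  obtain ⟨w, hw, hwi, hwS⟩ : ∃ w < n + 2, w ≠ i ∧ outerNbr m w ∉ S := by
    by_cases haS : outerNbr m a ∈ S
    · exact ⟨b, hb, hbi, fun hbS => hab (outerNbr_inj hn ha hb (hS haS hbS))⟩
    · exact ⟨a, ha, hai, haS⟩
  refine hasForkedPathAvoiding_of_clique hn (fun s hs t ht => kVert_adj hs ht) hi hw hwi.symm
    (kVert_adj_outerNbr hn hi) (kVert_adj_outerNbr hn hw)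
    (fun h => hwi (outerNbr_inj hn hi hw h).symm)
    (fun t ht => (outerNbr_ne_kVert hn hi ht).symm) (fun t ht => (outerNbr_ne_kVert hn hw ht).symm)
    fun u hu => ⟨fun h => (hSv u hu).1 (h ▸ kVert_adj_outerNbr hn hi), fun h => hwS (h ▸ hu),
      fun t ht h => ?_⟩
  obtain ⟨hadj, hne⟩ := hSv u hu
  subst h
  by_cases hti : t = i
  · exact hne (hti ▸ rfl)
  · exact hadj (kVert_adj hi ht (Ne.symm hti))

theorem hasForkedPathAvoiding_deVert_clique (hn : 1 ≤ n) {o : Option (ℕ × Fin n)} {y : ℕ}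
    (hy : y < n + 2) {S : Set (GV n ε)}
    (hSv : ∀ u ∈ S, ¬ (GEps n ε).Adj (deVert o y) u ∧ u ≠ deVert o y)
    (hSp : ∀ u ∈ S, u ≠ deVert o (n + 3)) :
    HasForkedPathAvoiding (GEps n ε) n (deVert o y) S := by
  obtain ⟨c, hc, hcy⟩ : ∃ c < n + 2, c ≠ y :=
    ⟨if y = 0 then 1 else 0, by split_ifs <;> omega, by split_ifs <;> omega⟩
  have hκ : ∀ t < n + 2, Equiv.swap c (n + 2) t < n + 3 :=
    fun t ht => swap_apply_lt (by omega) (by omega) (by omega)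
  have hκc : ∀ t < n + 2, Equiv.swap c (n + 2) t ≠ c := fun t ht h => by
    rw [Equiv.swap_apply_def] at h
    split_ifs at h <;> omega
  have hκy : Equiv.swap c (n + 2) y = y := Equiv.swap_apply_of_ne_of_ne hcy.symm (by omega)
  have := hasForkedPathAvoiding_of_clique (S := S) hn
    (κ := fun t => deVert o (Equiv.swap c (n + 2) t))
    (fun s hs t ht hst => deVert_adj_of_lt (hκ s hs) (hκ t ht) ((Equiv.injective _).ne hst))
    hy hc hcy.symm (b := deVert o c) (e := deVert o (n + 3))
    (by rw [hκy]; exact deVert_adj_of_lt (by omega) (by omega) hcy.symm)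
    (by simpa using deVert_adj_succ (ε := ε) (o := o) le_rfl (by omega))
    (by rw [Ne, deVert_inj (by omega) (by omega)]; omega)
    (fun t ht => by
      rw [Ne, deVert_inj ((hκ t ht).le.trans (by omega)) (by omega)]
      exact hκc t ht)
    (fun t ht => by
      rw [Ne, deVert_inj ((hκ t ht).le.trans (by omega)) (by omega)]
      exact (hκ t ht).ne)
    fun u hu => ⟨fun h => (hSv u hu).1 (h ▸ deVert_adj_of_lt (by omega) (by omega) hcy.symm),
      hSp u hu, fun t ht h => ?_⟩
  · simpa only [hκy] using this
  obtain ⟨hadj, hne⟩ := hSv u hu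
  subst h
  by_cases hty : Equiv.swap c (n + 2) t = y
  · exact hne (by rw [hty])
  · exact hadj (deVert_adj_of_lt (by omega) (hκ t ht) (Ne.symm hty))

/-- From `p_s` down to `p₀` and on through the clique of the dead end, skipping its vertex `z`
(nothing is skipped for `z = n + 2`, which is `p₀`). -/
theorem hasForkedPathAvoiding_deVert_down {o : Option (ℕ × Fin n)} {s z : ℕ} (hs : s ≤ n)
    (hz : z ≤ n + 2) (hsz : 1 ≤ s ∨ z = n + 2) {S : Set (GV n ε)}
    (hSpath : ∀ u ∈ S, ∀ x, n + 2 ≤ x → x ≤ n + 3 + s → u ≠ deVert o x)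
    (hSclique : ∀ u ∈ S, ∀ x < n + 2, x ≠ z → u ≠ deVert o x) :
    HasForkedPathAvoiding (GEps n ε) n (deVert o (n + 2 + s)) S := by
  set k : ℕ → ℕ := fun t => if t < z then t else t + 1
  have hk_lt : ∀ t < n + 2 - s, k t < n + 2 := fun t ht => by
    simp only [k]; split_ifs <;> omega
  have hk_ne : ∀ t, k t ≠ z := fun t => by
    simp only [k]; split_ifs <;> omega
  have hk_inj : ∀ t t', k t = k t' → t = t' := fun t t' => by
    simp only [k]; split_ifs <;> omega
  have hP : ∀ j ≤ s,
      (GEps n ε).Adj (deVert o (n + 3 + s - j)) (deVert o (n + 3 + s - (j + 1))) := fun j hj => by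
      have h := deVert_adj_succ (ε := ε) (o := o) (x := n + 2 + s - j) (by omega) (by omega)
      rw [show n + 2 + s - j + 1 = n + 3 + s - j by omega] at h
      rw [show n + 3 + s - (j + 1) = n + 2 + s - j by omega]
      exact h.symm
  have h0 : ∀ t < n + 2 - s, (GEps n ε).Adj (deVert o (n + 3 + s - (s + 1))) (deVert o (k t)) :=
    fun t ht => by
      have := hk_lt t ht
      rw [show n + 3 + s - (s + 1) = n + 2 by omega]
      exact deVert_adj_of_lt (by omega) (by omega) (by omega)
  have key := hasForkedPathAvoiding_of_append_clique (H := GEps n ε) (n := n) (S := S)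
    (P := fun j => deVert o (n + 3 + s - j)) (κ := fun t => deVert o (k t)) (r := s + 1)
    (by omega) (by omega) (fun j hj => hP j (by omega))
    (fun j hj j' hj' h => by
      simp only [Set.mem_Iic] at hj hj'
      rw [deVert_inj (by omega) (by omega)] at h
      omega)
    (fun t ht t' ht' htt' => deVert_adj_of_lt (Nat.lt_succ_of_lt (hk_lt t (by omega)))
      (Nat.lt_succ_of_lt (hk_lt t' (by omega))) fun h => htt' (hk_inj t t' h))
    (fun j hj t ht => by
      have := hk_lt t (by omega)
      rw [Ne, deVert_inj (by omega) (by omega)]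
      omega)
    (h0 0 (by omega)) (fun _ => h0 1 (by omega))
    (fun j hj hu => hSpath _ hu _ (by omega) (by omega) rfl)
    (fun t ht hu => hSclique _ hu _ (hk_lt t (by omega)) (hk_ne t) rfl)
  simpa [show n + 3 + s - 1 = n + 2 + s by omega] using key

/-- From `p_s` up to `p_{n+1}` and on into the clique `K_{n+2}` next to it. -/
theorem hasForkedPathAvoiding_deVert_up {o : Option (ℕ × Fin n)} {s : ℕ} (hs : 2 ≤ s)
    (hs' : s ≤ n ∨ o = none ∧ s = n + 1) {S : Set (GV n ε)}
    (hSpath : ∀ u ∈ S, ∀ x, n + 1 + s ≤ x → x ≤ 2 * n + 3 → u ≠ deVert o x)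
    (hSexit : ∀ u ∈ S, ∀ t ≤ s, u ≠ exitClique o t) :
    HasForkedPathAvoiding (GEps n ε) n (deVert o (n + 2 + s)) S := by
  have hbound : ∀ t ≤ s, t ≤ n ∨ o = none ∧ t = n + 1 := fun t ht => by
    rcases hs' with hs' | ⟨ho, hs'⟩
    · exact Or.inl (by omega)
    · rcases ht.lt_or_eq with ht | rfl
      exacts [Or.inl (by omega), Or.inr ⟨ho, hs'⟩]
  have key := hasForkedPathAvoiding_of_append_clique (H := GEps n ε) (n := n) (S := S)
    (P := fun j => deVert o (n + 1 + s + j)) (κ := exitClique o) (r := n + 2 - s)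
    (by omega) (by omega) (fun j hj => deVert_adj_succ (by omega) (by omega))
    (fun j hj j' hj' h => by
      simp only [Set.mem_Iic] at hj hj'
      rw [deVert_inj (by omega) (by omega)] at h
      omega)
    (fun t ht t' ht' htt' => exitClique_adj (hbound t (by omega)) (hbound t' (by omega)) htt')
    (fun j hj t ht => deVert_ne_exitClique (by omega) (hbound t (by omega)))
    (by simpa [show n + 1 + s + (n + 2 - s) = 2 * n + 3 by omega] using
      deVert_top_adj_exitClique (ε := ε) o)
    (fun h => absurd h (by omega))
    (fun j hj hu => hSpath _ hu _ (by omega) (by omega) rfl)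
    (fun t ht hu => hSexit _ hu t (by omega) rfl)
  simpa [show n + 1 + s + 1 = n + 2 + s by omega] using key

theorem hasForkedPathAvoiding_hwVert_left (hn : 1 ≤ n) {m c : ℕ} (hc : c + 1 ≤ n)
    {S : Set (GV n ε)} (hSpath : ∀ u ∈ S, ∀ t, 1 ≤ t → t ≤ c + 2 → u ≠ hwVert m t)
    (hSk : ∀ u ∈ S, ∀ j < n + 2, u ≠ kVert m j) :
    HasForkedPathAvoiding (GEps n ε) n (hwVert m (c + 1)) S := by
  have key := hasForkedPathAvoiding_of_append_clique (H := GEps n ε) (n := n) (S := S)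
    (P := fun j => hwVert m (c + 2 - j)) (κ := fun t => kVert m (n + 1 - t)) (r := c + 1)
    (by omega) (by omega)
    (fun j hj => by
      have h := hwVert_adj_succ (ε := ε) hn (m := m) (t := c + 1 - j) (by omega)
      rw [show c + 1 - j + 1 = c + 2 - j by omega] at h
      rw [show c + 2 - (j + 1) = c + 1 - j by omega]
      exact h.symm)
    (fun j hj j' hj' h => by
      simp only [Set.mem_Iic] at hj hj'
      rw [hwVert_inj (by omega) (by omega)] at h
      omega)
    (fun t ht t' ht' htt' => kVert_adj (by omega) (by omega) (by omega))
    (fun j hj t ht => hwVert_ne_kVert_self (by omega) (by omega) (by omega))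
    (by simpa [hwVert_zero] using (hwVert_adj_succ (ε := ε) hn (m := m) (t := 0) (by omega)).symm)
    (fun h => absurd h (by omega))
    (fun j hj hu => hSpath _ hu _ (by omega) (by omega) rfl)
    (fun t ht hu => hSk _ hu _ (by omega) rfl)
  simpa [show c + 2 - 1 = c + 1 by omega] using key

theorem hasForkedPathAvoiding_hwVert_right (hn : 1 ≤ n) {m c : ℕ} (hc : 1 ≤ c)
    (hcL : c + 1 ≤ n + (ε m).toNat) {S : Set (GV n ε)}
    (hSpath : ∀ u ∈ S, ∀ t, c ≤ t → t ≤ n + (ε m).toNat → u ≠ hwVert m t)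
    (hSk : ∀ u ∈ S, ∀ j < n + 2, u ≠ kVert (m + 1) j) :
    HasForkedPathAvoiding (GEps n ε) n (hwVert m (c + 1)) S := by
  have hε : (ε m).toNat ≤ 1 := Bool.toNat_le _
  have key := hasForkedPathAvoiding_of_append_clique (H := GEps n ε) (n := n) (S := S)
    (P := fun j => hwVert m (c + j)) (κ := fun t => kVert (m + 1) t)
    (r := n + (ε m).toNat - c) (by omega) (by omega)
    (fun j hj => hwVert_adj_succ hn (by omega))
    (fun j hj j' hj' h => by
      simp only [Set.mem_Iic] at hj hj'
      rw [hwVert_inj (by omega) (by omega)] at h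
      omega)
    (fun t ht t' ht' htt' => kVert_adj (by omega) (by omega) htt')
    (fun j hj t ht => hwVert_ne_kVert (by omega) (by omega) (by omega))
    (by simpa [show c + (n + (ε m).toNat - c) = n + (ε m).toNat by omega, hwVert_top] using
      hwVert_adj_succ (ε := ε) hn (m := m) (t := n + (ε m).toNat) le_rfl)
    (fun h => absurd h (by omega))
    (fun j hj hu => hSpath _ hu _ (by omega) (by omega) rfl)
    (fun t ht hu => hSk _ hu _ (by omega) rfl)
  simpa [add_comm] using key

def IsRobust (v : GV n ε) : Prop :=
  (∃ m j, j < n + 2 ∧ v = kVert m j) ∨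
    ∃ o x, n + 2 ≤ x ∧ x ≤ 2 * n + 2 ∧ v = deVert o x

theorem hasForkedPathAvoiding_deVert_path {o : Option (ℕ × Fin n)} {s : ℕ}
    (hs : s ≤ n) {S : Set (GV n ε)} (hS : S.Subsingleton)
    (hSv : ∀ u ∈ S,
      ¬ (GEps n ε).Adj (deVert o (n + 2 + s)) u ∧ u ≠ deVert o (n + 2 + s)) :
    HasForkedPathAvoiding (GEps n ε) n (deVert o (n + 2 + s)) S := by
  by_cases hup : ∃ u ∈ S, ∃ t, t + 2 ≤ s ∧ u = deVert o (n + 2 + t)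
  · obtain ⟨u₀, hu₀, t, ht, rfl⟩ := hup
    refine hasForkedPathAvoiding_deVert_up (by omega) (Or.inl hs) (fun u hu x hx hx' h => ?_)
      fun u hu t' ht' h => ?_
    · rw [hS hu hu₀, deVert_inj (by omega) (by omega)] at h
      omega
    · rw [hS hu hu₀] at h
      exact deVert_ne_exitClique (by omega) (Or.inl (by omega)) h
  push Not at hup
  obtain ⟨z, hz, hsz, hzS⟩ : ∃ z ≤ n + 2, (1 ≤ s ∨ z = n + 2) ∧
      ∀ u ∈ S, ∀ x < n + 2, x ≠ z → u ≠ deVert o x := by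
    by_cases hcl : ∃ u ∈ S, ∃ x < n + 2, u = deVert o x
    · obtain ⟨u₀, hu₀, x₀, hx₀, rfl⟩ := hcl
      refine ⟨x₀, by omega, ?_, fun u hu x hx hxz h => ?_⟩
      · by_contra! h0
        have hs0 : s = 0 := by omega
        subst hs0
        exact (hSv _ hu₀).1 (deVert_adj_of_lt (by omega) (by omega) (by omega))
      · rw [hS hu hu₀, deVert_inj (by omega) (by omega)] at h
        exact hxz h.symm
    · push Not at hcl
      exact ⟨n + 2, le_rfl, Or.inr rfl, fun u hu x hx _ => hcl u hu x hx⟩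
  refine hasForkedPathAvoiding_deVert_down hs hz hsz (fun u hu x hx hx' h => ?_) hzS
  obtain ⟨hadj, hne⟩ := hSv u hu
  subst h
  rcases (show x + 2 ≤ n + 2 + s ∨ x = n + 1 + s ∨ x = n + 2 + s ∨ x = n + 3 + s by omega)
    with hx₁ | rfl | rfl | rfl
  · exact hup _ hu (x - (n + 2)) (by omega) (by rw [show n + 2 + (x - (n + 2)) = x by omega])
  · exact hadj (by simpa [show n + 2 + s = n + 1 + s + 1 by omega] using
      (deVert_adj_succ (ε := ε) (o := o) (x := n + 1 + s) (by omega) (by omega)).symm)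
  · exact hne rfl
  · exact hadj (by simpa [show n + 3 + s = n + 2 + s + 1 by omega] using
      deVert_adj_succ (ε := ε) (o := o) (x := n + 2 + s) (by omega) (by omega))

theorem hasForkedPathAvoiding_deVert_none_top (hn : 1 ≤ n) {S : Set (GV n ε)}
    (hSv : ∀ u ∈ S, u ≠ deVert none (2 * n + 3)) (hSr : ∀ u ∈ S, ¬ IsRobust u) :
    HasForkedPathAvoiding (GEps n ε) n (deVert none (2 * n + 3)) S := by
  have key := hasForkedPathAvoiding_deVert_up (ε := ε) (o := none) (s := n + 1) (S := S)
    (by omega) (Or.inr ⟨rfl, rfl⟩) (fun u hu x hx hx' h => ?_)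
    fun u hu t ht h => hSr u hu (Or.inl ⟨0, t, by omega, h⟩)
  · simpa [show n + 2 + (n + 1) = 2 * n + 3 by omega] using key
  rcases (show x = 2 * n + 2 ∨ x = 2 * n + 3 by omega) with rfl | rfl
  exacts [hSr u hu (Or.inr ⟨none, _, by omega, le_rfl, h⟩), hSv u hu h]

theorem hasForkedPathAvoiding_hwVert (hn : 1 ≤ n) {m c : ℕ} (hc : c + 1 ≤ n + (ε m).toNat)
    {S : Set (GV n ε)} (hS : S.Subsingleton)
    (hSv : ∀ u ∈ S, ¬ (GEps n ε).Adj (hwVert m (c + 1)) u ∧ u ≠ hwVert m (c + 1))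
    (hSr : ∀ u ∈ S, ¬ IsRobust u) :
    HasForkedPathAvoiding (GEps n ε) n (hwVert m (c + 1)) S := by
  have hε : (ε m).toNat ≤ 1 := Bool.toNat_le _
  have hSk : ∀ m', ∀ u ∈ S, ∀ j < n + 2, u ≠ kVert m' j :=
    fun m' u hu j hj h => hSr u hu (Or.inl ⟨m', j, hj, h⟩)
  have hnbr : ∀ u ∈ S,
      u ≠ hwVert m c ∧ u ≠ hwVert m (c + 1) ∧ u ≠ hwVert m (c + 2) := by
    intro u hu
    obtain ⟨hadj, hne⟩ := hSv u hu
    exact ⟨fun h => hadj (h ▸ (hwVert_adj_succ hn (by omega)).symm), hne,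
      fun h => hadj (h ▸ hwVert_adj_succ hn hc)⟩
  by_cases hlow : ∃ u ∈ S, ∃ t, 1 ≤ t ∧ t < c ∧ u = hwVert m t
  · obtain ⟨u₀, hu₀, t₀, ht₀, ht₀c, rfl⟩ := hlow
    refine hasForkedPathAvoiding_hwVert_right hn (by omega) hc (fun u hu t ht ht' h => ?_)
      (hSk (m + 1))
    rw [hS hu hu₀, hwVert_inj (by omega) (by omega)] at h
    omega
  push Not at hlow
  by_cases hcn : c + 1 ≤ n
  · refine hasForkedPathAvoiding_hwVert_left hn hcn (fun u hu t ht ht' => ?_) (hSk m)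
    rcases (show t < c ∨ t = c ∨ t = c + 1 ∨ t = c + 2 by omega) with htc | rfl | rfl | rfl
    exacts [hlow u hu t ht htc, (hnbr u hu).1, (hnbr u hu).2.1, (hnbr u hu).2.2]
  · refine hasForkedPathAvoiding_hwVert_right hn (by omega) hc (fun u hu t ht ht' => ?_)
      (hSk (m + 1))
    rcases (show t = c ∨ t = c + 1 by omega) with rfl | rfl
    exacts [(hnbr u hu).1, (hnbr u hu).2.1]

theorem exists_eq_kVert_or_deVert_or_hwVert (v : GV n ε) :
    (∃ m j, j < n + 2 ∧ v = kVert m j) ∨ (∃ o x, x ≤ 2 * n + 2 ∧ v = deVert o x) ∨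
      v = deVert none (2 * n + 3) ∨
        ∃ m c, c + 1 ≤ n + (ε m).toNat ∧ v = hwVert m (c + 1) := by
  rcases v with ⟨x, hx⟩ | ⟨m, ⟨j, hj⟩ | ⟨i, ⟨x, hx⟩⟩⟩ | ⟨m, ⟨c, hc⟩⟩
  · rcases (show x ≤ 2 * n + 2 ∨ x = 2 * n + 3 by omega) with hx' | rfl
    · exact Or.inr (Or.inl ⟨none, x, hx', (deVert_none_eq hx).symm⟩)
    · exact Or.inr (Or.inr (Or.inl (deVert_none_eq hx).symm))
  · exact Or.inl ⟨m, j, hj, (kVert_eq hj).symm⟩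
  · exact Or.inr (Or.inl ⟨some (m, i), x, by omega, (deVert_some_eq hx).symm⟩)
  · exact Or.inr (Or.inr (Or.inr ⟨m, c, hc, (hwVert_eq (by omega) hc).symm⟩))

theorem hasForkedPathAvoiding_of_isRobust (hn : 1 ≤ n) {v : GV n ε} (hv : IsRobust v)
    {S : Set (GV n ε)} (hS : S.Subsingleton)
    (hSv : ∀ u ∈ S, ¬ (GEps n ε).Adj v u ∧ u ≠ v) :
    HasForkedPathAvoiding (GEps n ε) n v S := by
  rcases hv with ⟨m, j, hj, rfl⟩ | ⟨o, x, hx, hx', rfl⟩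
  · exact hasForkedPathAvoiding_kVert hn hj hS hSv
  · obtain ⟨s, rfl⟩ := Nat.exists_eq_add_of_le hx
    exact hasForkedPathAvoiding_deVert_path (by omega) hS hSv

theorem hasForkedPathAvoiding_of_forall_not_isRobust (hn : 1 ≤ n) (v : GV n ε) {S : Set (GV n ε)}
    (hS : S.Subsingleton) (hSv : ∀ u ∈ S, ¬ (GEps n ε).Adj v u ∧ u ≠ v)
    (hSr : ∀ u ∈ S, ¬ IsRobust u) : HasForkedPathAvoiding (GEps n ε) n v S := by
  rcases exists_eq_kVert_or_deVert_or_hwVert v with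
    hv | ⟨o, x, hx, rfl⟩ | rfl | ⟨m, c, hc, rfl⟩
  · exact hasForkedPathAvoiding_of_isRobust hn (Or.inl hv) hS hSv
  · by_cases hxc : x < n + 2
    · exact hasForkedPathAvoiding_deVert_clique hn hxc hSv fun u hu h =>
        hSr u hu (Or.inr ⟨o, n + 3, by omega, by omega, h⟩)
    · exact hasForkedPathAvoiding_of_isRobust hn (Or.inr ⟨o, x, by omega, hx, rfl⟩) hS hSv
  · exact hasForkedPathAvoiding_deVert_none_top hn (fun u hu => (hSv u hu).2) hSr
  · exact hasForkedPathAvoiding_hwVert hn hc hS hSv hSr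

theorem hasForkedPathAvoiding_or (hn : 1 ≤ n) {v u : GV n ε} (huv : u ≠ v)
    (hvu : ¬ (GEps n ε).Adj v u) :
    HasForkedPathAvoiding (GEps n ε) n v {u} ∨ HasForkedPathAvoiding (GEps n ε) n u {v} := by
  by_cases hu : IsRobust u
  · refine Or.inr (hasForkedPathAvoiding_of_isRobust hn hu Set.subsingleton_singleton ?_)
    rintro _ rfl
    exact ⟨fun h => hvu h.symm, huv.symm⟩
  · refine Or.inl (hasForkedPathAvoiding_of_forall_not_isRobust hn v Set.subsingleton_singleton ?_ ?_)
    · rintro _ rfl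
      exact ⟨hvu, huv⟩
    · rintro _ rfl
      exact hu

end GEps

/-- If `G_ε` is a subgraph of a `B_n`-free graph `G` (witnessed by an injective graph
    homomorphism `f`), then every vertex of `G_ε` has the same degree in `G_ε` as
    in `G`. -/
theorem gEps_degree_eq (n : ℕ) (hn : 1 ≤ n) (ε : ℕ → Bool) {V : Type*}
    (G : SimpleGraph V) (f : GEps n ε →g G) (hf : Function.Injective f)
    (hG : GraphFree (Bridge n) G) (v : GV n ε) :
    ((GEps n ε).neighborSet v).encard = (G.neighborSet (f v)).encard := by
  rw [neighborSet_eq_image_of_hasForkedPathAvoiding (fun _ _ => GEps.hasForkedPathAvoiding_or hn)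
    (fun v => GEps.hasForkedPathAvoiding_of_forall_not_isRobust hn v Set.subsingleton_empty (by simp)
      (by simp)) f hf hG v, hf.injOn.encard_image]
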